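/- arXiv:2105.02423 — 2 statements merged into one kernel-verified Lean document; each statement's English description precedes it below -/
import Mathlib

section
/- Let Q ∈ ℝ^{N×N} be a symmetric matrix with nonnegative off-diagonal entries Q_{ij} such that the quadratic form satisfies ξ^T Q ξ = ∑_{i<j} Q_{ij}(ξ_i − ξ_j)^2 for all ξ, and suppose the minimum cut condition holds: for every nonempty proper subset S ⊂ {1,...,N}, ∑_{i∈S, j∉S} Q_{ij} ≥ π_min·c for constants π_min, c > 0. Then for every ξ ∈ ℝ^N with π^T ξ = 0 (where π has positive entries and min_i π_i = π_min), ξ^T Q ξ ≥ (π_min·c / N²)·‖ξ‖². -/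
/-!
List ξ increasingly as v₀ ≤ ⋯ ≤ v_{N-1} with gaps g_k = v_{k+1} - v_k. The sublevel sets
{ξ ≤ v_k}, k < N - 1, are proper nonempty cuts, and since a sum of nonnegative numbers squared
dominates the sum of their squares, a pair i, j contributes Q_ij (ξ_i - ξ_j)² ≥ Q_ij ∑ g_k² over
the gaps lying between ξ_i and ξ_j. Exchanging the sums gives
ξᵀQξ ≥ ∑_k g_k² · cut_k ≥ πmin c ∑ g_k².
On the other side, π-balance forces min ξ ≤ 0 ≤ max ξ, so ξ_i² ≤ (max ξ - min ξ)² = (∑ g_k)²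
≤ N ∑ g_k² by Cauchy–Schwarz, whence ‖ξ‖² ≤ N² ∑ g_k².
-/

open Matrix Finset

theorem Monotone.sum_Ico_sq_sub_le {f : ℕ → ℝ} (hf : Monotone f) {a b : ℕ} (hab : a ≤ b) :
    ∑ k ∈ Ico a b, (f (k + 1) - f k) ^ 2 ≤ (f b - f a) ^ 2 := by
  rw [← sum_Ico_sub f hab]
  exact sum_sq_le_sq_sum_of_nonneg fun k _ => sub_nonneg.2 (hf k.le_succ)

theorem Monotone.sum_Ico_sq_sub_add_le {f : ℕ → ℝ} (hf : Monotone f) (a b : ℕ) :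
    ∑ k ∈ Ico a b, (f (k + 1) - f k) ^ 2 + ∑ k ∈ Ico b a, (f (k + 1) - f k) ^ 2 ≤
      (f a - f b) ^ 2 := by
  rcases le_total a b with hab | hba
  · rw [Ico_eq_empty_of_le hab, sum_empty, add_zero, ← neg_sub, neg_sq]
    exact hf.sum_Ico_sq_sub_le hab
  · rw [Ico_eq_empty_of_le hba, sum_empty, zero_add]
    exact hf.sum_Ico_sq_sub_le hba

theorem Finset.sum_sum_eq_sum_sum_lt_add_sum_diag {ι M : Type*} [Fintype ι] [LinearOrder ι]
    [AddCommMonoid M] (G : ι → ι → M) :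
    ∑ i, ∑ j, G i j = ∑ i, ∑ j ∈ {j | i < j}, (G i j + G j i) + ∑ i, G i i := by
  have hrow : ∀ i, ∑ j, G i j = ∑ j ∈ {j | i < j}, G i j + ∑ j ∈ {j | j < i}, G i j + G i i := by
    intro i
    have hsplit : ∀ j, G i j = (if i < j then G i j else 0) + (if j < i then G i j else 0) +
        if i = j then G i j else 0 := by
      intro j
      rcases lt_trichotomy i j with h | rfl | h
      · simp [h, h.not_gt, h.ne]
      · simp
      · simp [h, h.not_gt, h.ne']
    rw [sum_congr rfl fun j _ => hsplit j, sum_add_distrib, sum_add_distrib, sum_ite_eq,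
      if_pos (mem_univ i), ← sum_filter, ← sum_filter]
  have hswap : ∑ i, ∑ j ∈ {j | j < i}, G i j = ∑ i, ∑ j ∈ {j | i < j}, G j i :=
    sum_comm' (by intro i j; simp)
  simp only [hrow, sum_add_distrib, hswap]

theorem Monotone.sum_mul_sum_Ico_sq_sub_le {ι : Type*} [Fintype ι] [LinearOrder ι]
    {Q : Matrix ι ι ℝ} (hQ : Q.IsSymm) (hQnonneg : ∀ i j, i ≠ j → 0 ≤ Q i j) {f : ℕ → ℝ}
    (hf : Monotone f) (r : ι → ℕ) :
    ∑ i, ∑ j, Q i j * ∑ k ∈ Ico (r i) (r j), (f (k + 1) - f k) ^ 2 ≤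
      ∑ i, ∑ j ∈ {j | i < j}, Q i j * (f (r i) - f (r j)) ^ 2 := by
  rw [sum_sum_eq_sum_sum_lt_add_sum_diag]
  simp only [Ico_self, sum_empty, mul_zero, sum_const_zero, add_zero]
  gcongr with i _ j hj
  rw [hQ.apply i j, ← mul_add]
  exact mul_le_mul_of_nonneg_left (hf.sum_Ico_sq_sub_add_le _ _)
    (hQnonneg i j (mem_filter.1 hj).2.ne)

section Cut

variable {ι : Type*} [Fintype ι] [DecidableEq ι]

def cutWeight (Q : Matrix ι ι ℝ) (S : Finset ι) : ℝ := ∑ i ∈ S, ∑ j ∈ Sᶜ, Q i j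

theorem sum_mul_cutWeight_sublevel (Q : Matrix ι ι ℝ) (r : ι → ℕ) {n : ℕ} (hr : ∀ i, r i ≤ n)
    (w : ℕ → ℝ) :
    ∑ k ∈ range n, w k * cutWeight Q {i | r i ≤ k} =
      ∑ i, ∑ j, Q i j * ∑ k ∈ Ico (r i) (r j), w k := by
  have hIco : ∀ i j, Ico (r i) (r j) = {k ∈ range n | r i ≤ k ∧ ¬ r j ≤ k} := by
    intro i j; ext k; simp only [mem_Ico, mem_filter, mem_range]; have := hr j; omega
  simp only [hIco, cutWeight, compl_filter, sum_filter, mul_sum, ite_and, mul_ite, mul_zero,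
    ite_sum_zero]
  rw [sum_comm]
  refine sum_congr rfl fun i _ => ?_
  rw [sum_comm]
  refine sum_congr rfl fun j _ => sum_congr rfl fun k _ => ?_
  rw [mul_comm]

end Cut

theorem exists_nonpos_of_sum_mul_eq_zero {ι : Type*} [Fintype ι] [Nonempty ι] {π ξ : ι → ℝ}
    (hπ : ∀ i, 0 < π i) (h : ∑ i, π i * ξ i = 0) : ∃ i, ξ i ≤ 0 := by
  by_contra! hpos
  exact (sum_pos (fun i _ => mul_pos (hπ i) (hpos i)) univ_nonempty).ne' h

/-- `ξ` listed in increasing order: `ξ = val ∘ rank` with `val` monotone. Both extreme ranks are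
attained, so each sublevel set `{i | rank i ≤ k}` with `k < n` is a nonempty proper subset. -/
structure MonotoneRanking {ι : Type*} (ξ : ι → ℝ) (n : ℕ) where
  rank : ι → ℕ
  val : ℕ → ℝ
  rank_le : ∀ i, rank i ≤ n
  exists_rank_eq_zero : ∃ i, rank i = 0
  exists_rank_eq : ∃ i, rank i = n
  monotone_val : Monotone val
  val_rank : ∀ i, val (rank i) = ξ i

namespace MonotoneRanking

noncomputable def ofFin {N : ℕ} (hN : 0 < N) (ξ : Fin N → ℝ) : MonotoneRanking ξ (N - 1) where
  rank i := (Tuple.sort ξ).symm i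
  val k := ξ (Tuple.sort ξ ⟨min k (N - 1), by omega⟩)
  rank_le i := Nat.le_sub_one_of_lt ((Tuple.sort ξ).symm i).2
  exists_rank_eq_zero := ⟨Tuple.sort ξ ⟨0, hN⟩, by simp⟩
  exists_rank_eq := ⟨Tuple.sort ξ ⟨N - 1, by omega⟩, by simp⟩
  monotone_val a b hab := Tuple.monotone_sort ξ (by simp only [Fin.mk_le_mk]; omega)
  val_rank i := by
    have h : min (((Tuple.sort ξ).symm i : Fin N) : ℕ) (N - 1) = (Tuple.sort ξ).symm i := by omega
    simp only [h, Fin.eta, Equiv.apply_symm_apply]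

variable {ι : Type*} {ξ : ι → ℝ} {n : ℕ} (R : MonotoneRanking ξ n)

def gap (k : ℕ) : ℝ := R.val (k + 1) - R.val k

theorem mul_sum_sq_gap_le [Fintype ι] [LinearOrder ι] {Q : Matrix ι ι ℝ} (hQ : Q.IsSymm)
    (hQnonneg : ∀ i j, i ≠ j → 0 ≤ Q i j) {P : ℝ}
    (hcut : ∀ S : Finset ι, S.Nonempty → S ≠ univ → P ≤ cutWeight Q S) :
    P * ∑ k ∈ range n, R.gap k ^ 2 ≤ ∑ i, ∑ j ∈ {j | i < j}, Q i j * (ξ i - ξ j) ^ 2 := by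
  have hsublevel : ∀ k ∈ range n, P ≤ cutWeight Q {i | R.rank i ≤ k} := by
    intro k hk
    obtain ⟨i₀, hi₀⟩ := R.exists_rank_eq_zero
    obtain ⟨i₁, hi₁⟩ := R.exists_rank_eq
    refine hcut _ ⟨i₀, by simp [hi₀]⟩ fun h => ?_
    have := h ▸ mem_univ i₁
    simp only [mem_filter, mem_univ, true_and, hi₁] at this
    exact (mem_range.1 hk).not_ge this
  calc P * ∑ k ∈ range n, R.gap k ^ 2
      ≤ ∑ k ∈ range n, R.gap k ^ 2 * cutWeight Q {i | R.rank i ≤ k} := by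
        rw [mul_sum]
        refine sum_le_sum fun k hk => ?_
        rw [mul_comm]
        exact mul_le_mul_of_nonneg_left (hsublevel k hk) (sq_nonneg _)
    _ = ∑ i, ∑ j, Q i j * ∑ k ∈ Ico (R.rank i) (R.rank j), R.gap k ^ 2 :=
        sum_mul_cutWeight_sublevel Q R.rank R.rank_le _
    _ ≤ ∑ i, ∑ j ∈ {j | i < j}, Q i j * (R.val (R.rank i) - R.val (R.rank j)) ^ 2 :=
        R.monotone_val.sum_mul_sum_Ico_sq_sub_le hQ hQnonneg R.rank
    _ = ∑ i, ∑ j ∈ {j | i < j}, Q i j * (ξ i - ξ j) ^ 2 := by simp only [R.val_rank]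

theorem sq_le_sq_val_sub [Fintype ι] {π : ι → ℝ} (hπ : ∀ i, 0 < π i)
    (hbal : ∑ i, π i * ξ i = 0) (i : ι) :
    ξ i ^ 2 ≤ (R.val n - R.val 0) ^ 2 := by
  have : Nonempty ι := ⟨i⟩
  obtain ⟨j, hj⟩ := exists_nonpos_of_sum_mul_eq_zero hπ hbal
  obtain ⟨k, hk⟩ := exists_nonpos_of_sum_mul_eq_zero (ξ := -ξ) hπ (by simp [hbal])
  have hle : ∀ i, R.val 0 ≤ ξ i ∧ ξ i ≤ R.val n := fun i =>
    R.val_rank i ▸ ⟨R.monotone_val (Nat.zero_le _), R.monotone_val (R.rank_le i)⟩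
  simp only [Pi.neg_apply, neg_nonpos] at hk
  exact sq_le_sq' (by linarith [hle i, hle k]) (by linarith [hle i, hle j])

theorem sq_val_sub_le : (R.val n - R.val 0) ^ 2 ≤ n * ∑ k ∈ range n, R.gap k ^ 2 := by
  have := sq_sum_le_card_mul_sum_sq (s := range n) (f := R.gap)
  rwa [show ∑ k ∈ range n, R.gap k = R.val n - R.val 0 from sum_range_sub R.val n,
    card_range] at this

theorem sum_sq_le [Fintype ι] {π : ι → ℝ} (hπ : ∀ i, 0 < π i) (hbal : ∑ i, π i * ξ i = 0) :
    ∑ i, ξ i ^ 2 ≤ Fintype.card ι * n * ∑ k ∈ range n, R.gap k ^ 2 := by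
  calc ∑ i, ξ i ^ 2 ≤ ∑ _i : ι, (R.val n - R.val 0) ^ 2 :=
        sum_le_sum fun i _ => R.sq_le_sq_val_sub hπ hbal i
    _ = Fintype.card ι * (R.val n - R.val 0) ^ 2 := by simp
    _ ≤ Fintype.card ι * (n * ∑ k ∈ range n, R.gap k ^ 2) := by
        gcongr
        exact R.sq_val_sub_le
    _ = Fintype.card ι * n * ∑ k ∈ range n, R.gap k ^ 2 := by ring

end MonotoneRanking

theorem stmt_2 (N : ℕ) (hN : 0 < N)
    (Q : Matrix (Fin N) (Fin N) ℝ) (hQsymm : Q.IsSymm)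
    (hQnonneg : ∀ i j, i ≠ j → 0 ≤ Q i j)
    (hform : ∀ ξ : Fin N → ℝ,
      ξ ⬝ᵥ Q.mulVec ξ =
        ∑ i, ∑ j ∈ Finset.univ.filter (fun j => i < j), Q i j * (ξ i - ξ j) ^ 2)
    (π : Fin N → ℝ) (hπ : ∀ i, 0 < π i)
    (πmin c : ℝ) (hc : 0 < c)
    (hπmin : πmin = Finset.univ.inf' (Finset.univ_nonempty_iff.mpr (Fin.pos_iff_nonempty.mp hN)) π)
    (hcut : ∀ S : Finset (Fin N), S.Nonempty → S ≠ Finset.univ →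
      πmin * c ≤ ∑ i ∈ S, ∑ j ∈ Sᶜ, Q i j) :
    ∀ ξ : Fin N → ℝ, ∑ i, π i * ξ i = 0 →
      (πmin * c / (N : ℝ) ^ 2) * ∑ i, (ξ i) ^ 2 ≤ ξ ⬝ᵥ Q.mulVec ξ := by
  intro ξ hbal
  have hP : 0 ≤ πmin * c := by
    have : 0 < πmin := hπmin ▸ (lt_inf'_iff _).2 fun i _ => hπ i
    positivity
  let R := MonotoneRanking.ofFin hN ξ
  set G := ∑ k ∈ range (N - 1), R.gap k ^ 2
  have hnorm : ∑ i, ξ i ^ 2 ≤ (N : ℝ) ^ 2 * G := by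
    have hG : 0 ≤ G := sum_nonneg fun k _ => sq_nonneg _
    have hN1 : ((N - 1 : ℕ) : ℝ) ≤ N := by exact_mod_cast N.sub_le 1
    calc ∑ i, ξ i ^ 2 ≤ N * (N - 1 : ℕ) * G := by
          simpa only [Fintype.card_fin] using R.sum_sq_le hπ hbal
      _ ≤ N ^ 2 * G := by rw [sq]; gcongr
  have hcutG : πmin * c * G ≤ ξ ⬝ᵥ Q *ᵥ ξ := hform ξ ▸ R.mul_sum_sq_gap_le hQsymm hQnonneg hcut
  calc πmin * c / N ^ 2 * ∑ i, ξ i ^ 2 ≤ πmin * c / N ^ 2 * (N ^ 2 * G) := by gcongr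
    _ = πmin * c * G := by field_simp
    _ ≤ ξ ⬝ᵥ Q *ᵥ ξ := hcutG
end

section
/- Let e: [t_k, t_{k+1}) → ℝ^q satisfy e(t_k) = 0 and ‖D⁺e(t)‖ ≤ C_0 for a constant C_0 > 0 (Dini derivative bound). If the next event time t_{k+1} is defined as the first time when ‖e(t)‖ ≥ √(η_0/σ)·e^{−γt/2} (with η_0, σ, γ > 0), then the inter-event time satisfies t_{k+1} − t_k ≥ (1/C_0)·√(η_0/σ)·e^{−γ t_{k+1}/2}. In particular, on any bounded time horizon, the inter-event times are bounded below by a positive constant, so no Zeno behavior occurs. -/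
theorem stmt_11 (q : ℕ) (tk tk1 C0 eta0 sigma gamma : ℝ)
    (hC0 : 0 < C0) (heta0 : 0 < eta0) (hsigma : 0 < sigma) (hgamma : 0 < gamma)
    (htk : tk ≤ tk1)
    (e : ℝ → EuclideanSpace ℝ (Fin q)) (d : ℝ → EuclideanSpace ℝ (Fin q))
    (hinit : e tk = 0)
    (hderiv : ∀ t ∈ Set.Icc tk tk1, HasDerivWithinAt e (d t) (Set.Icc tk tk1) t)
    (hdbound : ∀ t ∈ Set.Icc tk tk1, ‖d t‖ ≤ C0)
    (htrig : Real.sqrt (eta0 / sigma) * Real.exp (-gamma * tk1 / 2) ≤ ‖e tk1‖) :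
    (1 / C0) * Real.sqrt (eta0 / sigma) * Real.exp (-gamma * tk1 / 2) ≤ tk1 - tk := by
  have key : ‖e tk1 - e tk‖ ≤ C0 * ‖tk1 - tk‖ :=
    (convex_Icc tk tk1).norm_image_sub_le_of_norm_hasDerivWithin_le hderiv hdbound
      (Set.left_mem_Icc.2 htk) (Set.right_mem_Icc.2 htk)
  rw [hinit, sub_zero, Real.norm_eq_abs, abs_of_nonneg (by linarith)] at key
  rw [one_div, mul_assoc, inv_mul_le_iff₀ hC0]
  linarith
end
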